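/- arXiv:1505.00019 — 2 statements merged into one kernel-verified Lean document; each statement's English description precedes it below -/
import Mathlib

section
/- There is no 3-uniform morphism over the ternary alphabet {1,2,3} that is simultaneously weakly squarefree, cubefree, overlap-free and has a fixed point (i.e., some letter a with φ(a) starting in a). -/
/-- A square: a word of the form `x ++ x` with `x` nonempty. -/
def IsSq {α : Type*} (w : List α) : Prop := ∃ x : List α, x ≠ [] ∧ w = x ++ x

/-- A cube: a word of the form `x ++ x ++ x` with `x` nonempty. -/
def IsCube {α : Type*} (w : List α) : Prop := ∃ x : List α, x ≠ [] ∧ w = x ++ x ++ x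

/-- A weak square: a word of the form `a ++ x ++ x ++ a` with `a` a letter. -/
def IsWeakSq {α : Type*} (w : List α) : Prop :=
  ∃ (a : α) (x : List α), w = a :: (x ++ x ++ [a])

/-- An overlap: a word of the form `a ++ x ++ a ++ x ++ a`. -/
def IsOverlap {α : Type*} (w : List α) : Prop :=
  ∃ (a : α) (x : List α), w = a :: (x ++ a :: x ++ [a])

def SqFree {α : Type*} (w : List α) : Prop := ∀ v, v <:+: w → ¬ IsSq v
def CubeFree {α : Type*} (w : List α) : Prop := ∀ v, v <:+: w → ¬ IsCube v
def WeakSqFree {α : Type*} (w : List α) : Prop := ∀ v, v <:+: w → ¬ IsWeakSq v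
def OverlapFree {α : Type*} (w : List α) : Prop := ∀ v, v <:+: w → ¬ IsOverlap v

/-- Applying the morphism determined by letter images `φ` to a finite word. -/
def applyM {α : Type*} (φ : α → List α) (w : List α) : List α := (w.map φ).flatten

/-!
A morphism preserving cube-freeness is injective on letters: if `φ a = φ b` with `a ≠ b`, the
cube-free word `aba` is mapped to a cube.

Let now `φ` preserve weak-square-freeness and have three distinct images of length three. As `cc`
is a weak square, no image contains two equal adjacent letters and no image ends with the first
letter of another one. This forces the images to be `c m(c) c`, one for each letter `c`, with
`m(c) ≠ c`. A fixed-point-free map `m` on three letters is not an involution: if `m (m y) ≠ y`,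
put `x = m y` and `z = m x`. Concatenating the images beginning with `x`, `y`, `z` gives
`xzx yxy z m(z) z`, which contains the weak square `z xy xy z`.
-/

open Function

section
variable {α : Type*}

theorem List.forall_infix_iff_forall_mem_tails_inits (P : List α → Prop) (w : List α) :
    (∀ v, v <:+: w → P v) ↔ ∀ t ∈ w.tails, ∀ v ∈ t.inits, P v := by
  simp only [List.mem_tails, List.mem_inits]
  refine ⟨fun h t ht v hv => h v (hv.isInfix.trans ht.isInfix), fun h v hv => ?_⟩
  obtain ⟨t, hvt, htw⟩ := List.infix_iff_prefix_suffix.1 hv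
  exact h t htw v hvt

theorem isWeakSq_iff_exists_mem_inits (v : List α) :
    IsWeakSq v ↔ ∃ a ∈ v.head?, ∃ x ∈ v.tail.inits, v = a :: (x ++ x ++ [a]) := by
  constructor
  · rintro ⟨a, x, rfl⟩
    exact ⟨a, rfl, x, (List.mem_inits _ _).2 ⟨x ++ [a], by simp⟩, rfl⟩
  · rintro ⟨a, -, x, -, h⟩
    exact ⟨a, x, h⟩

instance [DecidableEq α] (v : List α) : Decidable (IsWeakSq v) :=
  decidable_of_iff _ (isWeakSq_iff_exists_mem_inits v).symm

instance [DecidableEq α] (w : List α) : Decidable (WeakSqFree w) :=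
  decidable_of_iff _ (List.forall_infix_iff_forall_mem_tails_inits _ w).symm

theorem WeakSqFree.infix {v w : List α} (hw : WeakSqFree w) (hv : v <:+: w) : WeakSqFree v :=
  fun u hu => hw u (hu.trans hv)

theorem WeakSqFree.isChain_ne {w : List α} (hw : WeakSqFree w) : w.IsChain (· ≠ ·) := by
  induction w with
  | nil => exact .nil
  | cons a w ih =>
    cases w with
    | nil => exact .singleton a
    | cons b w =>
      refine List.isChain_cons_cons.2 ⟨fun hab => ?_, ih (hw.infix (List.suffix_cons a _).isInfix)⟩
      exact hw [a, b] (List.prefix_append [a, b] w).isInfix ⟨a, [], by simp [hab]⟩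

theorem List.Nodup.weakSqFree {w : List α} (hw : w.Nodup) : WeakSqFree w := by
  rintro v hv ⟨a, x, rfl⟩
  have := hw.sublist hv.sublist
  simp at this

theorem cubeFree_of_ne {a b : α} (hab : a ≠ b) : CubeFree [a, b, a] := by
  rintro v hv ⟨x, hx, rfl⟩
  have hlen := hv.length_le
  simp only [List.length_append, List.length_cons, List.length_nil] at hlen
  have hx1 : x.length = 1 := by have := List.length_pos_of_ne_nil hx; omega
  obtain ⟨c, rfl⟩ := List.length_eq_one_iff.1 hx1
  obtain ⟨hca, hcb, -⟩ : c = a ∧ c = b ∧ _ := by simpa using hv.eq_of_length rfl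
  exact hab (hca.symm.trans hcb)

@[simp] theorem applyM_nil (φ : α → List α) : applyM φ [] = [] := rfl

@[simp] theorem applyM_cons (φ : α → List α) (a : α) (w : List α) :
    applyM φ (a :: w) = φ a ++ applyM φ w := rfl

theorem injective_of_preserves_cubeFree {φ : α → List α} (hne : ∀ a, φ a ≠ [])
    (hφ : ∀ W, CubeFree W → CubeFree (applyM φ W)) : Injective φ := by
  intro a b hab
  by_contra h
  refine hφ [a, b, a] (cubeFree_of_ne h) _ (List.infix_refl _) ⟨φ a, hne a, ?_⟩
  simp [hab]

end

theorem exists_perm_not_weakSqFree_applyM : ∀ a b c d e f g h i : Fin 3,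
    let ψ : Fin 3 → List (Fin 3) := ![[a, b, c], [d, e, f], [g, h, i]]
    [a, b, c, d, e, f, g, h, i, a, b, c].IsChain (· ≠ ·) →
    [a, b, c, g, h, i, d, e, f, a, b, c].IsChain (· ≠ ·) → [[a, b, c], [d, e, f], [g, h, i]].Nodup →
    ∃ x y z : Fin 3, [x, y, z].Nodup ∧ ¬ WeakSqFree (applyM ψ [x, y, z]) := by
  decide +kernel

theorem not_injective_of_preserves_weakSqFree (φ : Fin 3 → List (Fin 3))
    (hlen : ∀ a, (φ a).length = 3) (hφ : ∀ W, WeakSqFree W → WeakSqFree (applyM φ W)) :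
    ¬ Injective φ := by
  intro hinj
  obtain ⟨a, b, c, h0⟩ := List.length_eq_three.1 (hlen 0)
  obtain ⟨d, e, f, h1⟩ := List.length_eq_three.1 (hlen 1)
  obtain ⟨g, h, i, h2⟩ := List.length_eq_three.1 (hlen 2)
  have hφ_eq : φ = ![[a, b, c], [d, e, f], [g, h, i]] := by
    ext k : 1
    fin_cases k <;> assumption
  subst hφ_eq
  obtain ⟨x, y, z, hxyz, hbad⟩ := exists_perm_not_weakSqFree_applyM a b c d e f g h i
    (hφ [0, 1, 2, 0] (by decide)).isChain_ne (hφ [0, 2, 1, 0] (by decide)).isChain_ne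
    (List.nodup_ofFn.2 hinj)
  exact hbad (hφ _ hxyz.weakSqFree)

theorem stmt12 : ¬ ∃ φ : Fin 3 → List (Fin 3),
    (∀ a, (φ a).length = 3) ∧
    (∀ W, WeakSqFree W → WeakSqFree (applyM φ W)) ∧
    (∀ W, CubeFree W → CubeFree (applyM φ W)) ∧
    (∀ W, OverlapFree W → OverlapFree (applyM φ W)) ∧
    (∃ (a : Fin 3) (V : List (Fin 3)), φ a = a :: V) := by
  rintro ⟨φ, hlen, hw, hc, -, -⟩
  have hne (a : Fin 3) : φ a ≠ [] := List.ne_nil_of_length_pos (by simp [hlen])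
  exact not_injective_of_preserves_weakSqFree φ hlen hw (injective_of_preserves_cubeFree hne hc)
end

section
/- Every uniform, cyclic, squarefree morphism over the ternary alphabet {1,2,3} is weakly squarefree. -/
section Positions

variable {α : Type*} (d : α)

/- `d` is only the default of `getD`: every position read is in range. -/
def HasSqAt (w : List α) (S ρ : ℕ) : Prop :=
  0 < ρ ∧ S + 2 * ρ ≤ w.length ∧ ∀ t < ρ, w.getD (S + t) d = w.getD (S + ρ + t) d

def HasWeakSqAt (w : List α) (P ρ : ℕ) : Prop :=
  P + 2 * ρ + 1 < w.length ∧ w.getD P d = w.getD (P + 2 * ρ + 1) d ∧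
    ∀ t < ρ, w.getD (P + 1 + t) d = w.getD (P + 1 + ρ + t) d

variable {d}

theorem getD_eq_of_eq_append {w s v t : List α} (h : w = s ++ v ++ t) {i : ℕ}
    (hi : i < v.length) : w.getD (s.length + i) d = v.getD i d := by
  subst h
  rw [List.getD_append _ _ _ _ (by simp only [List.length_append]; omega),
    List.getD_append_right _ _ _ _ (by omega), Nat.add_sub_cancel_left]

theorem eq_take_append_take_drop_append_drop (w : List α) (q n : ℕ) :
    w = w.take q ++ (w.drop q).take n ++ w.drop (q + n) := by
  rw [List.append_assoc, ← List.drop_drop, List.take_append_drop, List.take_append_drop]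

theorem take_one_drop_eq_getD {w : List α} {i : ℕ} (hi : i < w.length) :
    (w.drop i).take 1 = [w.getD i d] := by
  rw [List.take_one_drop_eq_of_lt_length hi, List.getD_eq_getElem _ _ hi, List.get_eq_getElem]

theorem take_drop_eq_of_getD_eq {w : List α} {P Q n : ℕ} (hP : P + n ≤ w.length)
    (hQ : Q + n ≤ w.length) (h : ∀ t < n, w.getD (P + t) d = w.getD (Q + t) d) :
    (w.drop P).take n = (w.drop Q).take n := by
  refine List.ext_getElem (by simp only [List.length_take, List.length_drop]; omega)
    fun t ht _ => ?_
  simp only [List.length_take, List.length_drop] at ht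
  rw [List.getElem_take, List.getElem_drop, List.getElem_take, List.getElem_drop,
    ← List.getD_eq_getElem _ d, ← List.getD_eq_getElem _ d]
  exact h t (by omega)

theorem take_drop_isInfix (w : List α) (i n : ℕ) : (w.drop i).take n <:+: w :=
  (List.take_prefix _ _).isInfix.trans (List.drop_suffix _ _).isInfix

theorem HasSqAt.not_sqFree {w : List α} {S ρ : ℕ} (h : HasSqAt d w S ρ) : ¬ SqFree w := by
  obtain ⟨hρ, hlen, hper⟩ := h
  intro hw
  have hXX : (w.drop S).take ρ ++ (w.drop S).take ρ = (w.drop S).take (ρ + ρ) := by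
    rw [List.take_add, List.drop_drop, ← take_drop_eq_of_getD_eq (by omega) (by omega) hper]
  refine hw _ (hXX ▸ take_drop_isInfix w S (ρ + ρ)) ⟨_, ?_, rfl⟩
  rw [← List.length_pos_iff]
  simp only [List.length_take, List.length_drop]
  omega

theorem not_weakSqFree_iff {w : List α} : ¬ WeakSqFree w ↔ ∃ P ρ, HasWeakSqAt d w P ρ := by
  constructor
  · intro hw
    simp only [WeakSqFree, not_forall, not_not] at hw
    obtain ⟨_, ⟨s, t, hst⟩, a, X, rfl⟩ := hw
    have get := fun i (hi : i < (a :: (X ++ X ++ [a])).length) =>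
      getD_eq_of_eq_append (d := d) hst.symm hi
    simp only [List.length_cons, List.length_append, List.length_nil] at get
    refine ⟨s.length, X.length, ?_, ?_, fun t ht => ?_⟩
    · rw [← hst]; simp only [List.length_append, List.length_cons]; omega
    · rw [← add_zero s.length, get 0 (by omega), add_zero, add_assoc, get _ (by omega),
        List.getD_cons_zero, List.getD_cons_succ,
        List.getD_append_right _ _ _ _ (by simp only [List.length_append]; omega)]
      simp [two_mul]
    · rw [add_assoc, get _ (by omega), add_assoc, add_assoc, get _ (by omega), add_comm 1 t,
        show 1 + (X.length + t) = X.length + t + 1 by omega, List.getD_cons_succ,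
        List.getD_cons_succ, List.append_assoc,
        List.getD_append _ _ _ _ ht, List.getD_append_right _ _ _ _ (by omega),
        List.getD_append _ _ _ _ (by omega), Nat.add_sub_cancel_left]
  · rintro ⟨P, ρ, hlen, hend, hper⟩ hw
    have hsplit : (w.drop P).take (1 + ρ + ρ + 1) = [w.getD P d] ++ (w.drop (P + 1)).take ρ ++
        (w.drop (P + 1 + ρ)).take ρ ++ [w.getD (P + 2 * ρ + 1) d] := by
      rw [List.take_add, List.take_add, List.take_add, take_one_drop_eq_getD (d := d) (by omega),
        List.drop_drop, List.drop_drop, List.drop_drop, take_one_drop_eq_getD (d := d) (by omega),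
        ← add_assoc, ← add_assoc, ← add_assoc, show P + 1 + ρ + ρ = P + 2 * ρ + 1 by omega]
    refine hw _ (take_drop_isInfix w P (1 + ρ + ρ + 1)) ⟨w.getD P d, (w.drop (P + 1)).take ρ, ?_⟩
    rw [hsplit, ← take_drop_eq_of_getD_eq (by omega) (by omega) hper, ← hend]
    simp

end Positions

section Uniform

variable {α : Type*} {φ : α → List α} {L : ℕ} {d : α}

theorem applyM_append (φ : α → List α) (u v : List α) :
    applyM φ (u ++ v) = applyM φ u ++ applyM φ v := by
  simp [applyM]

theorem length_applyM (hunif : ∀ a, (φ a).length = L) (W : List α) :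
    (applyM φ W).length = W.length * L := by
  simp [applyM, Function.comp_def, hunif]

theorem getD_take_drop {W : List α} {q n i : ℕ} (hi : i < n) :
    ((W.drop q).take n).getD i d = W.getD (q + i) d := by
  simp [List.getD_eq_getElem?_getD, hi]

theorem getD_applyM_take_drop (hunif : ∀ a, (φ a).length = L) {W : List α} {q n i : ℕ}
    (hqn : q + n ≤ W.length) (hi : i < n * L) :
    (applyM φ W).getD (q * L + i) d = (applyM φ ((W.drop q).take n)).getD i d := by
  have h := congrArg (applyM φ) (eq_take_append_take_drop_append_drop W q n)
  rw [applyM_append, applyM_append] at h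
  have := getD_eq_of_eq_append (d := d) h (i := i) (by
    rwa [length_applyM hunif, List.length_take, List.length_drop, min_eq_left (by omega)])
  rwa [length_applyM hunif, List.length_take, min_eq_left (by omega)] at this

theorem getD_applyM (hunif : ∀ a, (φ a).length = L) {W : List α} {q o : ℕ}
    (hq : q < W.length) (ho : o < L) :
    (applyM φ W).getD (q * L + o) d = (φ (W.getD q d)).getD o d := by
  rw [getD_applyM_take_drop hunif (n := 1) hq (by simpa using ho),
    take_one_drop_eq_getD (d := d) hq]
  simp [applyM]

theorem sqFree_of_length_le_three {w : List α} (hlen : w.length ≤ 3)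
    (hadj : ∀ i, i + 1 < w.length → w.getD i d ≠ w.getD (i + 1) d) : SqFree w := by
  rintro v ⟨s, t, hst⟩ ⟨x, hx, rfl⟩
  have hlen' := congrArg List.length hst
  simp only [List.length_append] at hlen'
  obtain ⟨c, rfl⟩ : ∃ c, x = [c] := List.length_eq_one_iff.mp (by
    have := List.length_pos_iff.mpr hx
    omega)
  have get := fun i (hi : i < 2) => getD_eq_of_eq_append (d := d) hst.symm (v := [c] ++ [c]) hi
  simp only [List.length_cons, List.length_nil] at hlen'
  exact hadj s.length (by omega) ((get 0 (by omega)).trans (get 1 (by omega)).symm)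

theorem SqFree.getD_ne_getD_succ {w : List α} (hw : SqFree w) {i : ℕ} (hi : i + 1 < w.length) :
    w.getD i d ≠ w.getD (i + 1) d :=
  fun h => HasSqAt.not_sqFree (S := i) (ρ := 1) ⟨one_pos, by omega, by simpa using h⟩ hw

theorem WeakSqFree.getD_ne_getD_succ {w : List α} (hw : WeakSqFree w) {i : ℕ}
    (hi : i + 1 < w.length) : w.getD i d ≠ w.getD (i + 1) d :=
  fun h => (not_weakSqFree_iff (d := d)).2 ⟨i, 0, by simpa, by simpa, by simp⟩ hw

theorem sqFree_apply_of_sqFree_applyM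
    (hsf : ∀ z : List α, z.length ≤ 3 → SqFree z → SqFree (applyM φ z)) (a : α) :
    SqFree (φ a) := by
  simpa [applyM] using hsf [a] (by simp) (sqFree_of_length_le_three (d := a) (by simp) (by simp))

theorem sqFree_append_of_sqFree_applyM
    (hsf : ∀ z : List α, z.length ≤ 3 → SqFree z → SqFree (applyM φ z)) {a b : α} (hab : a ≠ b) :
    SqFree (φ a ++ φ b) := by
  simpa [applyM] using hsf [a, b] (by simp)
    (sqFree_of_length_le_three (d := a) (by simp) fun i hi => by
      obtain rfl : i = 0 := by simp only [List.length_cons, List.length_nil] at hi; omega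
      simpa using hab)

/- If `x = c`, the tail of `φ x` of length `j` is repeated as the head of `φ y`; otherwise the tail
of `φ x` from `j` on is repeated as the head of `φ c`. -/
theorem false_of_image_at_offset (hunif : ∀ a, (φ a).length = L)
    (hsf : ∀ a b, a ≠ b → SqFree (φ a ++ φ b)) {c x y : α} (hxy : x ≠ y) {j : ℕ} (hj : 0 < j)
    (hjL : j < L) (h : ∀ o < L, (φ c).getD o d = (φ x ++ φ y).getD (j + o) d) : False := by
  by_cases hxc : x = c
  · subst hxc
    refine HasSqAt.not_sqFree (d := d) (S := L - j) (ρ := j)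
      ⟨hj, by simp only [List.length_append, hunif]; omega, fun t ht => ?_⟩ (hsf x y hxy)
    rw [List.getD_append _ _ _ _ (by rw [hunif]; omega), h _ (by omega)]
    congr 1
    omega
  · refine HasSqAt.not_sqFree (d := d) (S := j) (ρ := L - j)
      ⟨by omega, by simp only [List.length_append, hunif]; omega, fun t ht => ?_⟩ (hsf x c hxc)
    rw [List.getD_append _ _ _ _ (by rw [hunif]; omega),
      ← List.getD_append _ (φ y) _ _ (by rw [hunif]; omega), ← h t (by omega),
      List.getD_append_right _ _ _ _ (by rw [hunif]; omega), hunif]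
    congr 1
    omega

theorem take_drop_two {W : List α} {m : ℕ} (hm : m + 1 < W.length) :
    (W.drop m).take 2 = [W.getD m d, W.getD (m + 1) d] := by
  rw [List.take_add (i := 1) (j := 1), take_one_drop_eq_getD (d := d) (by omega), List.drop_drop,
    take_one_drop_eq_getD (d := d) hm]
  rfl

theorem false_of_block_at_offset (hunif : ∀ a, (φ a).length = L)
    (hsf : ∀ a b, a ≠ b → SqFree (φ a ++ φ b)) {W : List α}
    (hW : ∀ i, i + 1 < W.length → W.getD i d ≠ W.getD (i + 1) d) {i m j : ℕ}
    (hi : i < W.length) (hm : m + 1 < W.length) (hj : 0 < j) (hjL : j < L)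
    (h : ∀ o < L, (applyM φ W).getD (i * L + o) d = (applyM φ W).getD (m * L + j + o) d) :
    False := by
  refine false_of_image_at_offset (d := d) hunif hsf (c := W.getD i d) (hW m hm) hj hjL
    fun o ho => ?_
  rw [← getD_applyM hunif hi ho, h o ho, add_assoc,
    getD_applyM_take_drop hunif (n := 2) (by omega) (by omega), take_drop_two (d := d) hm]
  simp [applyM]

theorem false_of_hasSqAt_within_three_blocks (hunif : ∀ a, (φ a).length = L)
    (hsf : ∀ z : List α, z.length ≤ 3 → SqFree z → SqFree (applyM φ z)) {W : List α}
    (hW : ∀ i, i + 1 < W.length → W.getD i d ≠ W.getD (i + 1) d) {S ρ q : ℕ}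
    (h : HasSqAt d (applyM φ W) S ρ) (hqS : q * L ≤ S) (hS : S + 2 * ρ ≤ (q + 3) * L) :
    False := by
  obtain ⟨hρ, hlen, hper⟩ := h
  rw [length_applyM hunif] at hlen
  have hq : q < W.length := Nat.lt_of_mul_lt_mul_right (a := L) (by omega)
  set n := min 3 (W.length - q)
  have hqn : q + n ≤ W.length := by omega
  have hSn : S + 2 * ρ ≤ q * L + n * L := by
    rcases min_cases 3 (W.length - q) with ⟨hn, -⟩ | ⟨hn, -⟩
    · rw [show n = 3 by omega]; linarith [add_mul q 3 L]
    · rw [← add_mul, show q + n = W.length by omega]; exact hlen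
  refine HasSqAt.not_sqFree (d := d) (S := S - q * L) (ρ := ρ)
    ⟨hρ, by
      rw [length_applyM hunif, List.length_take, List.length_drop, min_eq_left (by omega)]
      omega, fun t ht => ?_⟩
    (hsf ((W.drop q).take n) (by simp only [List.length_take, List.length_drop]; omega)
      (sqFree_of_length_le_three (d := d) (by simp only [List.length_take, List.length_drop]; omega)
        fun i hi => ?_))
  · rw [← getD_applyM_take_drop hunif hqn (by omega),
      ← getD_applyM_take_drop hunif hqn (by omega), show q * L + (S - q * L + t) = S + t by omega,
      show q * L + (S - q * L + ρ + t) = S + ρ + t by omega]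
    exact hper t ht
  · simp only [List.length_take, List.length_drop] at hi
    rw [getD_take_drop (by omega), getD_take_drop (by omega), ← add_assoc]
    exact hW _ (by omega)

theorem dvd_of_hasSqAt_applyM (hunif : ∀ a, (φ a).length = L)
    (hsf : ∀ z : List α, z.length ≤ 3 → SqFree z → SqFree (applyM φ z)) {W : List α}
    (hW : ∀ i, i + 1 < W.length → W.getD i d ≠ W.getD (i + 1) d) {S ρ : ℕ}
    (h : HasSqAt d (applyM φ W) S ρ) : L ∣ ρ := by
  have hsf2 : ∀ a b, a ≠ b → SqFree (φ a ++ φ b) := fun _ _ => sqFree_append_of_sqFree_applyM hsf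
  obtain ⟨hρ, hlen, hper⟩ := h
  rw [length_applyM hunif] at hlen
  have hL : 0 < L := Nat.pos_of_ne_zero (by rintro rfl; rw [Nat.mul_zero] at hlen; omega)
  by_contra hdvd
  obtain ⟨q, s, hs, rfl⟩ : ∃ q s, s < L ∧ S = q * L + s :=
    ⟨S / L, S % L, Nat.mod_lt _ hL, (Nat.div_add_mod' S L).symm⟩
  obtain ⟨e, r, hr, hr0, rfl⟩ : ∃ e r, r < L ∧ 0 < r ∧ ρ = e * L + r :=
    ⟨ρ / L, ρ % L, Nat.mod_lt _ hL, Nat.pos_of_ne_zero (hdvd ∘ Nat.dvd_of_mod_eq_zero),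
      (Nat.div_add_mod' ρ L).symm⟩
  have hlt : ∀ n, n * L < W.length * L → n < W.length := fun n => Nat.lt_of_mul_lt_mul_right
  rcases le_or_gt (2 * L) (s + (e * L + r)) with h1 | h1
  · -- block `q + 1` lies in the first half; its copy straddles blocks `q + 1 + e` and `q + 2 + e`
    refine false_of_block_at_offset hunif hsf2 hW (i := q + 1) (m := q + 1 + e) (j := r)
      (hlt _ (by linarith [add_mul q 1 L]))
      (hlt _ (by linarith [add_mul (q + 2) e L, add_mul q 2 L])) hr0 hr fun o ho => ?_
    have := hper ((q + 1) * L + o - (q * L + s)) (by rw [add_one_mul]; omega)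
    rwa [show q * L + s + ((q + 1) * L + o - (q * L + s)) = (q + 1) * L + o by
        rw [add_one_mul]; omega,
      show q * L + s + (e * L + r) + ((q + 1) * L + o - (q * L + s)) = (q + 1 + e) * L + r + o by
        simp only [add_mul, one_mul]; omega] at this
  rcases le_or_gt (3 * L) (s + 2 * (e * L + r)) with h2 | h2
  · -- block `q + 2` lies in the second half; its copy straddles blocks `q + 1 - e` and `q + 2 - e`
    obtain ⟨m, hm⟩ : ∃ m, m + e = q + 1 := ⟨q + 1 - e, Nat.sub_add_cancel
      (by have := Nat.lt_of_mul_lt_mul_right (a := L) (b := e) (c := 2) (by omega); omega)⟩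
    have hq2 : q + 2 < W.length := hlt _ (by linarith [add_mul q 2 L, add_mul q 3 L])
    have hmL : m * L + e * L = q * L + L := by rw [← add_mul, hm, add_one_mul]
    refine false_of_block_at_offset hunif hsf2 hW (i := q + 2) (m := m) (j := L - r) hq2
      (by omega) (by omega) (by omega) fun o ho => ?_
    have := hper (m * L + (L - r) + o - (q * L + s)) (by omega)
    rw [show q * L + s + (m * L + (L - r) + o - (q * L + s)) = m * L + (L - r) + o by omega,
      show q * L + s + (e * L + r) + (m * L + (L - r) + o - (q * L + s)) = (q + 2) * L + o by
        rw [add_mul]; omega] at this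
    exact this.symm
  · -- `X X` lies in blocks `q`, `q + 1`, `q + 2`
    exact false_of_hasSqAt_within_three_blocks hunif hsf hW
      ⟨hρ, by rw [length_applyM hunif]; omega, hper⟩
      (Nat.le_add_right _ _) (by rw [add_mul]; omega)

end Uniform

section Translation

variable {G : Type*} [AddGroup G] {φ : G → List G} {L : ℕ}

theorem getD_applyM_eq_add (hunif : ∀ a, (φ a).length = L) (hφ : ∀ c, φ c = (φ 0).map (· + c))
    {W : List G} {q o : ℕ} (hq : q < W.length) (ho : o < L) :
    (applyM φ W).getD (q * L + o) 0 = (φ 0).getD o 0 + W.getD q 0 := by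
  have h0 : o < (φ 0).length := (hunif 0).symm ▸ ho
  rw [getD_applyM hunif hq ho, hφ, List.getD_eq_getElem _ _ (by simpa using h0),
    List.getElem_map, List.getD_eq_getElem _ _ h0]

/- Needed to pull back weak squares aligned with the blocks: their outer letters sit at the ends
of two blocks. -/
theorem getD_zero_eq_getD_pred (hunif : ∀ a, (φ a).length = L)
    (hφ : ∀ c, φ c = (φ 0).map (· + c))
    (hsf : ∀ z : List G, z.length ≤ 3 → SqFree z → SqFree (applyM φ z)) (hL : 0 < L) :
    (φ 0).getD 0 0 = (φ 0).getD (L - 1) 0 := by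
  by_contra hne
  set c := -(φ 0).getD 0 0 + (φ 0).getD (L - 1) 0
  have hc : (0 : G) ≠ c := fun h => hne (neg_add_eq_zero.mp h.symm)
  refine HasSqAt.not_sqFree (d := 0) (S := L - 1) (ρ := 1)
    ⟨one_pos, by simp only [length_applyM hunif, List.length_cons, List.length_nil]; omega,
      fun t ht => ?_⟩
    (hsf [0, c] (by simp) (sqFree_of_length_le_three (d := 0) (by simp) fun i hi => ?_))
  · obtain rfl : t = 0 := by omega
    have e1 := getD_applyM_eq_add hunif hφ (W := [0, c]) (q := 0) (o := L - 1) (by simp)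
      (by omega)
    have e2 := getD_applyM_eq_add hunif hφ (W := [0, c]) (q := 1) (o := 0) (by simp) hL
    simp only [zero_mul, zero_add, one_mul, add_zero] at e1 e2
    rw [add_zero, e1, Nat.sub_add_cancel hL, e2]
    simp [c]
  · obtain rfl : i = 0 := by simp only [List.length_cons, List.length_nil] at hi; omega
    simpa using hc

theorem hasWeakSqAt_of_hasWeakSqAt_applyM (hunif : ∀ a, (φ a).length = L)
    (hφ : ∀ c, φ c = (φ 0).map (· + c))
    (hsf : ∀ z : List G, z.length ≤ 3 → SqFree z → SqFree (applyM φ z)) {W : List G} {q e : ℕ}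
    (h : HasWeakSqAt 0 (applyM φ W) (q * L + (L - 1)) (e * L)) : HasWeakSqAt 0 W q e := by
  obtain ⟨hlen, hend, hper⟩ := h
  rw [length_applyM hunif] at hlen
  have hL : 0 < L := Nat.pos_of_ne_zero (by rintro rfl; simp at hlen)
  have hlt : q + 2 * e + 1 < W.length := Nat.lt_of_mul_lt_mul_right (a := L) (by
    simp only [add_mul, one_mul, mul_assoc]; omega)
  refine ⟨hlt, add_left_cancel (a := (φ 0).getD (L - 1) 0) ?_,
    fun t ht => add_left_cancel (a := (φ 0).getD 0 0) ?_⟩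
  · rw [← getD_applyM_eq_add hunif hφ (by omega) (by omega), hend,
      ← getD_zero_eq_getD_pred hunif hφ hsf hL, ← getD_applyM_eq_add hunif hφ hlt hL]
    congr 1
    simp only [add_mul, one_mul, mul_assoc]
    omega
  · have htL : t * L < e * L := Nat.mul_lt_mul_of_pos_right ht hL
    have := hper (t * L) htL
    rwa [show q * L + (L - 1) + 1 + t * L = (q + 1 + t) * L + 0 by simp only [add_mul]; omega,
      show q * L + (L - 1) + 1 + e * L + t * L = (q + 1 + e + t) * L + 0 by
        simp only [add_mul]; omega,
      getD_applyM_eq_add hunif hφ (by omega) hL, getD_applyM_eq_add hunif hφ (by omega) hL] at this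

theorem not_hasWeakSqAt_applyM (hunif : ∀ a, (φ a).length = L)
    (hφ : ∀ c, φ c = (φ 0).map (· + c))
    (hsf : ∀ z : List G, z.length ≤ 3 → SqFree z → SqFree (applyM φ z)) {W : List G} {q o e : ℕ}
    (ho : o + 1 < L) : ¬ HasWeakSqAt 0 (applyM φ W) (q * L + o) (e * L) := by
  rintro ⟨hlen, hend, hper⟩
  rw [length_applyM hunif] at hlen
  have hq : q + 2 * e < W.length := Nat.lt_of_mul_lt_mul_right (a := L) (by
    simp only [add_mul, mul_assoc]; omega)
  have val := fun {i o : ℕ} (hi : i < W.length) (ho : o < L) =>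
    getD_applyM_eq_add hunif hφ hi ho
  have h1 : W.getD q 0 = W.getD (q + e) 0 := by
    rcases e.eq_zero_or_pos with rfl | he
    · rfl
    · have := hper 0 (Nat.mul_pos he (by omega))
      rw [add_zero, add_zero,
        show q * L + o + 1 + e * L = (q + e) * L + (o + 1) by rw [add_mul]; omega,
        show q * L + o + 1 = q * L + (o + 1) by omega, val (by omega) ho, val (by omega) ho] at this
      exact add_left_cancel this
  have h2 : W.getD (q + e) 0 = W.getD (q + 2 * e) 0 := by
    rcases e.eq_zero_or_pos with rfl | he
    · rfl
    · have heL : L ≤ e * L := Nat.le_mul_of_pos_left L he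
      have := hper (e * L - o - 1) (by omega)
      rw [show q * L + o + 1 + e * L + (e * L - o - 1) = (q + 2 * e) * L + 0 by
          simp only [add_mul, mul_assoc]; omega,
        show q * L + o + 1 + (e * L - o - 1) = (q + e) * L + 0 by rw [add_mul]; omega,
        val (by omega) (by omega), val hq (by omega)] at this
      exact add_left_cancel this
  refine (sqFree_apply_of_sqFree_applyM hsf 0).getD_ne_getD_succ (d := 0) (i := o)
    (by rw [hunif]; exact ho) (add_right_cancel (b := W.getD q 0) ?_)
  rw [← val (by omega) (by omega), hend, h1, h2, ← val hq ho]
  congr 1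
  simp only [add_mul, mul_assoc]
  omega

theorem weakSqFree_applyM (hunif : ∀ a, (φ a).length = L) (hφ : ∀ c, φ c = (φ 0).map (· + c))
    (hsf : ∀ z : List G, z.length ≤ 3 → SqFree z → SqFree (applyM φ z)) {W : List G}
    (hW : WeakSqFree W) : WeakSqFree (applyM φ W) := by
  by_contra hu
  obtain ⟨P, ρ, h⟩ := (not_weakSqFree_iff (d := 0)).1 hu
  have hL : 0 < L := Nat.pos_of_ne_zero fun hL => by
    have := h.1
    rw [length_applyM hunif, hL, Nat.mul_zero] at this
    omega
  obtain ⟨e, rfl⟩ : L ∣ ρ := by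
    rcases ρ.eq_zero_or_pos with rfl | hρ
    · exact dvd_zero L
    · exact dvd_of_hasSqAt_applyM hunif hsf (fun i hi => hW.getD_ne_getD_succ hi)
        ⟨hρ, by have := h.1; omega, h.2.2⟩
  rw [mul_comm, ← Nat.div_add_mod' P L] at h
  by_cases ho : P % L + 1 < L
  · exact not_hasWeakSqAt_applyM hunif hφ hsf ho h
  · rw [show P % L = L - 1 by have := Nat.mod_lt P hL; omega] at h
    exact (not_weakSqFree_iff (d := 0)).2
      ⟨_, _, hasWeakSqAt_of_hasWeakSqAt_applyM hunif hφ hsf h⟩ hW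

end Translation

theorem stmt17 (φ : Fin 3 → List (Fin 3)) (L : ℕ)
    (hunif : ∀ a, (φ a).length = L)
    (hcyc : ∀ p : Fin 3, φ (p + 1) = (φ p).map (· + 1))
    (hsf : ∀ W, SqFree W → SqFree (applyM φ W)) :
    ∀ W, WeakSqFree W → WeakSqFree (applyM φ W) := by
  have h1 : φ 1 = (φ 0).map (· + 1) := by simpa using hcyc 0
  have hφ : ∀ c, φ c = (φ 0).map (· + c) := by
    intro c
    fin_cases c
    · simp
    · exact h1
    · show φ (1 + 1) = (φ 0).map (· + (1 + 1))
      rw [hcyc, h1, List.map_map]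
      simp [Function.comp_def, add_assoc]
  exact fun W hW => weakSqFree_applyM hunif hφ (fun z _ => hsf z) hW
end
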